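/- arXiv:1905.01691 — 4 statements merged into one kernel-verified Lean document; each statement's English description precedes it below -/
import Mathlib

section
/- Let U : ℝ → ℝ and suppose there exist constants C ≤ 0, M > 0, m > 0 and p > 1 such that U(y) ≥ U(x) + C + m·|x−y|^p whenever M ≤ x ≤ y or y ≤ x ≤ −M. Then with m' := 2^(1−p)·m there exists C' ≤ C such that U(y) ≥ U(x) + C' + m'·|x−y|^p whenever 0 ≤ x ≤ y or y ≤ x ≤ 0. -/
open Real

lemma pow_split (a b p : ℝ) (ha : 0 ≤ a) (hb : 0 ≤ b) (hp : 1 ≤ p) :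
    (2 : ℝ) ^ (1 - p) * (a + b) ^ p ≤ a ^ p + b ^ p := by
  have key := NNReal.rpow_add_le_mul_rpow_add_rpow (a.toNNReal) (b.toNNReal) hp
  have key' : (a + b) ^ p ≤ (2 : ℝ) ^ (p - 1) * (a ^ p + b ^ p) := by
    have := (NNReal.coe_le_coe).2 key
    push_cast at this
    rw [Real.coe_toNNReal _ ha, Real.coe_toNNReal _ hb] at this
    convert this using 2
  have h2 : (0:ℝ) < (2:ℝ) ^ (1 - p) := Real.rpow_pos_of_pos (by norm_num) _
  calc (2 : ℝ) ^ (1 - p) * (a + b) ^ p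
      ≤ (2 : ℝ) ^ (1 - p) * ((2 : ℝ) ^ (p - 1) * (a ^ p + b ^ p)) := by
        exact mul_le_mul_of_nonneg_left key' h2.le
    _ = a ^ p + b ^ p := by
        rw [← mul_assoc, ← Real.rpow_add (by norm_num : (0:ℝ) < 2)]
        norm_num

lemma aux_side (U : ℝ → ℝ) (hU : Continuous U) (C M m p : ℝ)
    (hC : C ≤ 0) (hM : 0 < M) (hm : 0 < m) (hp : 1 < p)
    (h : ∀ x y : ℝ, M ≤ x → x ≤ y → U x + C + m * |x - y| ^ p ≤ U y) :
    ∃ C' ≤ C, ∀ x y : ℝ, 0 ≤ x → x ≤ y →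
      U x + C' + (2 : ℝ) ^ (1 - p) * m * |x - y| ^ p ≤ U y := by
  obtain ⟨K, hK⟩ := (isCompact_Icc (a := (0:ℝ)) (b := M)).exists_bound_of_continuousOn
    hU.continuousOn
  have hK0 : 0 ≤ K := le_trans (norm_nonneg _) (hK 0 ⟨le_refl _, hM.le⟩)
  set C' : ℝ := C - 2 * K - m * (2 * M) ^ p with hC'def
  have h2Mp : 0 ≤ (2 * M) ^ p := Real.rpow_nonneg (by positivity) _
  have hml : (2:ℝ) ^ (1 - p) ≤ 1 :=
    Real.rpow_le_one_of_one_le_of_nonpos (by norm_num) (by linarith)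
  have hm'pos : 0 < (2:ℝ) ^ (1 - p) * m :=
    mul_pos (Real.rpow_pos_of_pos (by norm_num) _) hm
  refine ⟨C', by nlinarith, fun x y hx hxy => ?_⟩
  have habs : |x - y| = y - x := by rw [abs_sub_comm]; exact abs_of_nonneg (by linarith)
  have hpow_nonneg : (0:ℝ) ≤ |x - y| ^ p := Real.rpow_nonneg (abs_nonneg _) _
  by_cases hxM : M ≤ x
  · have := h x y hxM hxy
    nlinarith [mul_le_mul_of_nonneg_right hml hpow_nonneg, hm.le,
      mul_le_mul_of_nonneg_right (mul_le_mul_of_nonneg_right hml hm.le) hpow_nonneg]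
  · push_neg at hxM
    have hUx : U x ≤ K := le_trans (le_abs_self _) (hK x ⟨hx, hxM.le⟩)
    by_cases hyM : y ≤ M
    · have hUy : -K ≤ U y := neg_le_of_abs_le (hK y ⟨le_trans hx hxy, hyM⟩)
      have hsmall : |x - y| ^ p ≤ (2 * M) ^ p := by
        apply Real.rpow_le_rpow (abs_nonneg _) _ (by linarith)
        rw [habs]; linarith
      have hb : (2:ℝ) ^ (1 - p) * m * |x - y| ^ p ≤ m * (2 * M) ^ p := by
        calc (2:ℝ) ^ (1 - p) * m * |x - y| ^ p ≤ 1 * m * |x - y| ^ p := by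
              apply mul_le_mul_of_nonneg_right (mul_le_mul_of_nonneg_right hml hm.le) hpow_nonneg
          _ = m * |x - y| ^ p := by ring
          _ ≤ m * (2 * M) ^ p := mul_le_mul_of_nonneg_left hsmall hm.le
      linarith
    · push_neg at hyM
      have hUM : -K ≤ U M := neg_le_of_abs_le (hK M ⟨hM.le, le_refl _⟩)
      have hMy := h M y (le_refl _) hyM.le
      have hMyabs : |M - y| = y - M := by
        rw [abs_sub_comm]; exact abs_of_nonneg (by linarith)
      rw [hMyabs] at hMy
      have hsplit : (2:ℝ) ^ (1 - p) * (y - x) ^ p ≤ (M - x) ^ p + (y - M) ^ p := by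
        have := pow_split (M - x) (y - M) p (by linarith) (by linarith) hp.le
        have heq : M - x + (y - M) = y - x := by ring
        rwa [heq] at this
      have hMx : (M - x) ^ p ≤ (2 * M) ^ p :=
        Real.rpow_le_rpow (by linarith) (by linarith) (by linarith)
      have hbound : (2:ℝ) ^ (1 - p) * m * |x - y| ^ p ≤
          m * (2 * M) ^ p + m * (y - M) ^ p := by
        rw [habs]
        calc (2:ℝ) ^ (1 - p) * m * (y - x) ^ p
            = m * ((2:ℝ) ^ (1 - p) * (y - x) ^ p) := by ring
          _ ≤ m * ((M - x) ^ p + (y - M) ^ p) := mul_le_mul_of_nonneg_left hsplit hm.le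
          _ ≤ m * (2 * M) ^ p + m * (y - M) ^ p := by nlinarith
      linarith

theorem stmt_0 (U : ℝ → ℝ) (hU : Continuous U) (C M m p : ℝ)
    (hC : C ≤ 0) (hM : 0 < M) (hm : 0 < m) (hp : 1 < p)
    (h : ∀ x y : ℝ, (M ≤ x ∧ x ≤ y) ∨ (y ≤ x ∧ x ≤ -M) →
      U x + C + m * |x - y| ^ p ≤ U y) :
    ∃ C' ≤ C, ∀ x y : ℝ, (0 ≤ x ∧ x ≤ y) ∨ (y ≤ x ∧ x ≤ 0) →
      U x + C' + (2 : ℝ) ^ (1 - p) * m * |x - y| ^ p ≤ U y := by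
  obtain ⟨C₁, hC₁, h₁⟩ := aux_side U hU C M m p hC hM hm hp
    (fun x y hx hxy => h x y (Or.inl ⟨hx, hxy⟩))
  obtain ⟨C₂, hC₂, h₂⟩ := aux_side (fun t => U (-t)) (hU.comp continuous_neg) C M m p hC hM hm hp
    (fun x y hx hxy => by
      have := h (-x) (-y) (Or.inr ⟨by linarith, by linarith⟩)
      rwa [show (-x) - (-y) = -(x - y) by ring, abs_neg] at this)
  refine ⟨min C₁ C₂, le_trans (min_le_left _ _) hC₁, fun x y hxy => ?_⟩
  rcases hxy with ⟨hx, hxy⟩ | ⟨hxy, hx⟩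
  · have := h₁ x y hx hxy
    have hmin : min C₁ C₂ ≤ C₁ := min_le_left _ _
    linarith
  · have := h₂ (-x) (-y) (by linarith) (by linarith)
    simp only [neg_neg] at this
    rw [show (-x) - (-y) = -(x - y) by ring, abs_neg] at this
    have hmin : min C₁ C₂ ≤ C₂ := min_le_right _ _
    linarith
end

section
/- Let U : ℝ → ℝ be C¹ with U(0) = 0, e^{−U} integrable against e^{−αξ} on each half-line for all α ∈ ℝ, and define ψ⁺(γ) = ∫₀^∞ U'(ξ)e^{−2γξ−U(ξ)} dξ, ψ⁻(γ) = −∫_{−∞}^0 U'(ξ)e^{2γξ−U(ξ)} dξ, and Z(γ) = 1 − ψ⁺(γ)ψ⁻(γ). Then Z(0) = 0 and Z'(0) = 2·∫_{−∞}^∞ e^{−U(ξ)} dξ ≠ 0; in particular 0 is a simple root of Z. -/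
/-!
Integrating by parts, `ψ⁺(γ) = e^{-U(0)} - 2γ E⁺(γ)` with `E⁺(γ) = ∫₀^∞ e^{-2γξ-U(ξ)} dξ`, and the
reflection `ξ ↦ -ξ` turns `ψ⁻` into `ψ⁺` of `ξ ↦ U(-ξ)`. Hence `Z(γ) = γ K(γ)` with `K` continuous
and `K(0) = 2 (E⁺(0) + E⁻(0)) = 2 ∫ e^{-U}`, which is therefore `Z'(0)`.

The integration by parts needs `U' e^{cξ-U}` to be integrable on `(0, ∞)`: since `U' ≥ 0` there,
its partial integrals are bounded by `e^{-U(0)} + |c| ∫₀^∞ e^{cξ-U}`. The boundary term at `∞`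
vanishes because both the function and its derivative are integrable.
-/

open MeasureTheory Filter Set
open scoped Real Complex

theorem hasDerivAt_of_eq_add_sub_mul {𝕜 : Type*} [NontriviallyNormedField 𝕜] {f g : 𝕜 → 𝕜}
    {a : 𝕜} (hg : ContinuousAt g a) (hf : ∀ z, f z = f a + (z - a) * g z) :
    HasDerivAt f (g a) a := by
  rw [hasDerivAt_iff_tendsto_slope]
  refine (hg.tendsto.mono_left nhdsWithin_le_nhds).congr' ?_
  filter_upwards [self_mem_nhdsWithin] with z hz
  rw [slope_def_field, hf z, add_sub_cancel_left, mul_div_cancel_left₀ _ (sub_ne_zero.2 hz)]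

theorem norm_cexp_neg_two_mul_sub (W : ℝ → ℝ) (γ : ℂ) (x : ℝ) :
    ‖cexp (-2 * γ * x - W x)‖ = rexp (-2 * γ.re * x - W x) := by
  rw [Complex.norm_exp]
  simp

section HalfLine

variable {W : ℝ → ℝ}

theorem integrableOn_Ioi_exp_mul_sub (hInt : ∀ α : ℝ, Integrable (fun x => rexp (-W x - α * |x|)))
    (c : ℝ) : IntegrableOn (fun x => rexp (c * x - W x)) (Ioi 0) :=
  (hInt (-c)).integrableOn.congr_fun (fun x hx => by
    simp only [abs_of_pos (mem_Ioi.1 hx)]; ring_nf) measurableSet_Ioi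

theorem intervalIntegral_deriv_mul_exp_le (hW : ContDiff ℝ 1 W) {c R : ℝ} (hR : 0 ≤ R)
    (hint : IntegrableOn (fun x => rexp (c * x - W x)) (Ioi 0)) :
    ∫ x in (0 : ℝ)..R, deriv W x * rexp (c * x - W x)
      ≤ rexp (-W 0) + |c| * ∫ x in Ioi 0, rexp (c * x - W x) := by
  have hWc := hW.continuous
  have hW'c := hW.continuous_deriv le_rfl
  have hderiv : ∀ x, HasDerivAt (fun y => -rexp (c * y - W y))
      (deriv W x * rexp (c * x - W x) - c * rexp (c * x - W x)) x := fun x =>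
    (((hasDerivAt_id' x).const_mul c).sub (hW.differentiable one_ne_zero x).hasDerivAt).exp.neg
      |>.congr_deriv (by simp only [Pi.sub_apply]; ring)
  have hexp : Continuous fun x => rexp (c * x - W x) := by fun_prop
  have hftc : ∫ x in (0 : ℝ)..R, (deriv W x * rexp (c * x - W x) - c * rexp (c * x - W x))
      = rexp (-W 0) - rexp (c * R - W R) := by
    rw [intervalIntegral.integral_eq_sub_of_hasDerivAt (fun x _ => hderiv x)
      ((by fun_prop : Continuous fun x =>
        deriv W x * rexp (c * x - W x) - c * rexp (c * x - W x)).intervalIntegrable 0 R)]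
    simp only [mul_zero, zero_sub]
    ring
  have htail : ∫ x in (0 : ℝ)..R, rexp (c * x - W x) ≤ ∫ x in Ioi 0, rexp (c * x - W x) := by
    rw [intervalIntegral.integral_of_le hR]
    exact setIntegral_mono_set hint (ae_of_all _ fun x => (Real.exp_pos _).le)
      Ioc_subset_Ioi_self.eventuallyLE
  have hcoef : c * ∫ x in (0 : ℝ)..R, rexp (c * x - W x)
      ≤ |c| * ∫ x in Ioi 0, rexp (c * x - W x) :=
    (mul_le_mul_of_nonneg_right (le_abs_self c)
      (intervalIntegral.integral_nonneg hR fun x _ => (Real.exp_pos _).le)).trans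
      (mul_le_mul_of_nonneg_left htail (abs_nonneg c))
  rw [intervalIntegral.integral_sub ((by fun_prop : Continuous _).intervalIntegrable 0 R)
    ((hexp.const_mul c).intervalIntegrable 0 R), intervalIntegral.integral_const_mul] at hftc
  linarith [Real.exp_pos (c * R - W R)]

theorem integrableOn_Ioi_deriv_mul_exp (hW : ContDiff ℝ 1 W)
    (hW' : ∀ x ∈ Ioi (0 : ℝ), 0 ≤ deriv W x) {c : ℝ}
    (hint : IntegrableOn (fun x => rexp (c * x - W x)) (Ioi 0)) :
    IntegrableOn (fun x => deriv W x * rexp (c * x - W x)) (Ioi 0) := by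
  have hWc := hW.continuous
  have hW'c := hW.continuous_deriv le_rfl
  refine integrableOn_Ioi_of_intervalIntegral_norm_bounded
    (rexp (-W 0) + |c| * ∫ x in Ioi 0, rexp (c * x - W x)) 0
    (fun R => (by fun_prop : Continuous _).integrableOn_Ioc) tendsto_id ?_
  filter_upwards [eventually_ge_atTop 0] with R hR
  rw [id_eq]
  refine le_of_eq_of_le (intervalIntegral.integral_congr_ae (ae_of_all _ fun x hx => ?_))
    (intervalIntegral_deriv_mul_exp_le hW hR hint)
  rw [uIoc_of_le hR] at hx
  exact Real.norm_of_nonneg (mul_nonneg (hW' x hx.1) (Real.exp_nonneg _))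

theorem integrableOn_Ioi_ofReal_mul_cexp {g : ℝ → ℝ} (hg : Measurable g) (hW : Measurable W)
    {γ : ℂ} (hint : IntegrableOn (fun x => g x * rexp (-2 * γ.re * x - W x)) (Ioi 0)) :
    IntegrableOn (fun x : ℝ => (g x : ℂ) * cexp (-2 * γ * x - W x)) (Ioi 0) :=
  hint.congr' (by fun_prop : Measurable _).aestronglyMeasurable (ae_of_all _ fun x => by
    rw [norm_mul, norm_mul, norm_cexp_neg_two_mul_sub, Complex.norm_real, Real.norm_of_nonneg
      (Real.exp_nonneg _)])

/-- `psiIoi U` is the paper's `ψ⁺`; its `ψ⁻` is `psiIoi (fun x => U (-x))`. -/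
noncomputable def psiIoi (W : ℝ → ℝ) (γ : ℂ) : ℂ :=
  ∫ ξ in Ioi (0 : ℝ), ((deriv W ξ : ℝ) : ℂ) * cexp (-2 * γ * ξ - W ξ)

noncomputable def expIntegralIoi (W : ℝ → ℝ) (γ : ℂ) : ℂ :=
  ∫ ξ in Ioi (0 : ℝ), cexp (-2 * γ * ξ - W ξ)

theorem psiIoi_eq_exp_sub_mul_expIntegralIoi (hW : ContDiff ℝ 1 W)
    (hW' : ∀ x ∈ Ioi (0 : ℝ), 0 ≤ deriv W x)
    (hint : ∀ c : ℝ, IntegrableOn (fun x => rexp (c * x - W x)) (Ioi 0)) (γ : ℂ) :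
    psiIoi W γ = cexp (-W 0) - 2 * γ * expIntegralIoi W γ := by
  have hE : IntegrableOn (fun x : ℝ => cexp (-2 * γ * x - W x)) (Ioi 0) := by
    simpa using integrableOn_Ioi_ofReal_mul_cexp (g := fun _ => 1) measurable_const
      hW.continuous.measurable (by simpa using hint (-2 * γ.re))
  have hP : IntegrableOn (fun x : ℝ => ((deriv W x : ℝ) : ℂ) * cexp (-2 * γ * x - W x)) (Ioi 0) :=
    integrableOn_Ioi_ofReal_mul_cexp (measurable_deriv W) hW.continuous.measurable
      (integrableOn_Ioi_deriv_mul_exp hW hW' (hint _))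
  have hderiv : ∀ x : ℝ, HasDerivAt (fun y : ℝ => -cexp (-2 * γ * y - W y))
      (((deriv W x : ℝ) : ℂ) * cexp (-2 * γ * x - W x) + 2 * γ * cexp (-2 * γ * x - W x)) x := by
    intro x
    have hWx := (hW.differentiable one_ne_zero x).hasDerivAt.ofReal_comp
    exact ((((hasDerivAt_id' (x : ℂ)).comp_ofReal).const_mul (-2 * γ)).sub hWx).cexp.neg
      |>.congr_deriv (by simp only [Pi.sub_apply]; ring)
  have hP' := hP.add (hE.const_mul (2 * γ))
  have hlim := tendsto_zero_of_hasDerivAt_of_integrableOn_Ioi (fun x _ => hderiv x) hP' hE.neg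
  have hFTC := integral_Ioi_of_hasDerivAt_of_tendsto' (fun x _ => hderiv x) hP' hlim
  rw [integral_add hP (hE.const_mul _), integral_const_mul] at hFTC
  simp only [Complex.ofReal_zero, mul_zero, zero_sub, sub_neg_eq_add, zero_add] at hFTC
  rw [psiIoi, expIntegralIoi]
  linear_combination hFTC

theorem continuous_expIntegralIoi (hW : Continuous W)
    (hint : ∀ c : ℝ, IntegrableOn (fun x => rexp (c * x - W x)) (Ioi 0)) :
    Continuous (expIntegralIoi W) := by
  rw [continuous_iff_continuousAt]
  intro γ₀
  refine continuousAt_of_dominated (bound := fun x => rexp ((2 - 2 * γ₀.re) * x - W x))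
    (Eventually.of_forall fun γ => (by fun_prop : Continuous _).aestronglyMeasurable) ?_
    (hint _) (ae_of_all _ fun x => (by fun_prop : Continuous _).continuousAt)
  filter_upwards [Metric.ball_mem_nhds γ₀ one_pos] with γ hγ
  filter_upwards [ae_restrict_mem measurableSet_Ioi] with x hx
  rw [norm_cexp_neg_two_mul_sub]
  have hre := (Complex.abs_re_le_norm (γ - γ₀)).trans_lt (mem_ball_iff_norm.1 hγ)
  rw [Complex.sub_re] at hre
  have : -2 * γ.re * x ≤ (2 - 2 * γ₀.re) * x :=
    mul_le_mul_of_nonneg_right (by linarith [neg_abs_le (γ.re - γ₀.re)]) (mem_Ioi.1 hx).le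
  exact Real.exp_le_exp.2 (by linarith)

theorem psiIoi_eq_one_sub_mul_expIntegralIoi (hW : ContDiff ℝ 1 W) (hW0 : W 0 = 0)
    (hW' : ∀ x ∈ Ioi (0 : ℝ), 0 ≤ deriv W x)
    (hInt : ∀ α : ℝ, Integrable (fun x => rexp (-W x - α * |x|))) (γ : ℂ) :
    psiIoi W γ = 1 - 2 * γ * expIntegralIoi W γ := by
  rw [psiIoi_eq_exp_sub_mul_expIntegralIoi hW hW' (integrableOn_Ioi_exp_mul_sub hInt), hW0,
    Complex.ofReal_zero, neg_zero, Complex.exp_zero]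

end HalfLine

theorem hasDerivAt_zero_of_eq_one_sub_mul {𝕜 : Type*} [NontriviallyNormedField 𝕜]
    {Z E F : 𝕜 → 𝕜} (hE : ContinuousAt E 0) (hF : ContinuousAt F 0)
    (hZ : ∀ γ, Z γ = 1 - (1 - 2 * γ * E γ) * (1 - 2 * γ * F γ)) :
    HasDerivAt Z (2 * (E 0 + F 0)) 0 := by
  have hK : ContinuousAt (fun γ => 2 * (E γ + F γ) - 4 * γ * E γ * F γ) 0 := by fun_prop
  simpa using hasDerivAt_of_eq_add_sub_mul hK fun γ => by rw [hZ, hZ]; ring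

theorem neg_integral_Iio_eq_psiIoi_comp_neg (U : ℝ → ℝ) (γ : ℂ) :
    -∫ ξ in Iio (0 : ℝ), ((deriv U ξ : ℝ) : ℂ) * cexp (2 * γ * ξ - U ξ)
      = psiIoi (fun x => U (-x)) γ := by
  have h := integral_comp_neg_Ioi 0 fun ξ : ℝ => ((deriv U ξ : ℝ) : ℂ) * cexp (2 * γ * ξ - U ξ)
  rw [neg_zero] at h
  rw [← integral_Iic_eq_integral_Iio, ← h, ← integral_neg, psiIoi]
  congr 1 with ξ
  rw [deriv_comp_neg]
  push_cast
  ring_nf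

theorem expIntegralIoi_zero_add_comp_neg {U : ℝ → ℝ} (hU : Integrable fun x => rexp (-U x)) :
    expIntegralIoi U 0 + expIntegralIoi (fun x => U (-x)) 0 = ∫ ξ, ((rexp (-U ξ) : ℝ) : ℂ) := by
  have h := integral_comp_neg_Ioi 0 fun ξ : ℝ => ((rexp (-U ξ) : ℝ) : ℂ)
  rw [neg_zero] at h
  simp only [expIntegralIoi, zero_mul, mul_zero, zero_sub, ← Complex.ofReal_neg,
    ← Complex.ofReal_exp]
  rw [h, add_comm, intervalIntegral.integral_Iic_add_Ioi hU.ofReal.integrableOn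
    hU.ofReal.integrableOn]

theorem stmt_6 (U : ℝ → ℝ) (hU : ContDiff ℝ 1 U) (hU0 : U 0 = 0)
    (hUni : ∀ x : ℝ, 0 ≤ x → 0 ≤ deriv U x) (hUni' : ∀ x : ℝ, x ≤ 0 → deriv U x ≤ 0)
    (hInt : ∀ α : ℝ, Integrable (fun x => Real.exp (-U x - α * |x|)))
    (ψp ψm Z : ℂ → ℂ)
    (hψp : ∀ γ : ℂ, ψp γ =
      ∫ ξ in Set.Ioi (0 : ℝ), (Complex.ofReal (deriv U ξ)) * Complex.exp (-2 * γ * ξ - (U ξ : ℂ)))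
    (hψm : ∀ γ : ℂ, ψm γ =
      -∫ ξ in Set.Iio (0 : ℝ), (Complex.ofReal (deriv U ξ)) * Complex.exp (2 * γ * ξ - (U ξ : ℂ)))
    (hZ : ∀ γ : ℂ, Z γ = 1 - ψp γ * ψm γ) :
    Z 0 = 0 ∧ deriv Z 0 = 2 * ∫ ξ : ℝ, (Complex.ofReal (Real.exp (-U ξ))) ∧ deriv Z 0 ≠ 0 := by
  set V : ℝ → ℝ := fun x => U (-x)
  have hV : ContDiff ℝ 1 V := hU.comp contDiff_neg
  have hV' : ∀ x ∈ Ioi (0 : ℝ), 0 ≤ deriv V x := fun x hx => by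
    rw [deriv_comp_neg]
    linarith [hUni' (-x) (by linarith [mem_Ioi.1 hx])]
  have hIntV : ∀ α : ℝ, Integrable fun x => rexp (-V x - α * |x|) := fun α => by
    simpa using (hInt α).comp_neg
  have hp : ∀ γ, ψp γ = 1 - 2 * γ * expIntegralIoi U γ := fun γ =>
    (hψp γ).trans (psiIoi_eq_one_sub_mul_expIntegralIoi hU hU0 (fun x hx => hUni x hx.le) hInt γ)
  have hm : ∀ γ, ψm γ = 1 - 2 * γ * expIntegralIoi V γ := fun γ => by
    rw [hψm, neg_integral_Iio_eq_psiIoi_comp_neg, psiIoi_eq_one_sub_mul_expIntegralIoi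
      hV (by simp [V, hU0]) hV' hIntV]
  have hZd := hasDerivAt_zero_of_eq_one_sub_mul (Z := Z)
    (continuous_expIntegralIoi hU.continuous (integrableOn_Ioi_exp_mul_sub hInt)).continuousAt
    (continuous_expIntegralIoi hV.continuous
      (integrableOn_Ioi_exp_mul_sub hIntV)).continuousAt fun γ => by rw [hZ, hp, hm]
  have hIntExp : Integrable fun x => rexp (-U x) := by simpa using hInt 0
  rw [expIntegralIoi_zero_add_comp_neg hIntExp] at hZd
  refine ⟨by simp [hZ, hp, hm], hZd.deriv, ?_⟩
  rw [hZd.deriv, integral_complex_ofReal]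
  exact mul_ne_zero two_ne_zero (Complex.ofReal_ne_zero.2 (integral_exp_pos hIntExp).ne')
end

section
/- (Strong convexity of the potential family iff β ≥ 2) For β > 1 and U(x) = (1/β)·((1+x²)^{β/2} − 1), there exist m > 0 and M ≥ 0 with U''(x) ≥ m for all |x| ≥ M if and only if β ≥ 2. -/
open Real

theorem stmt_17 (β : ℝ) (hβ : 1 < β) (U : ℝ → ℝ)
    (hU : ∀ x : ℝ, U x = (1 / β) * ((1 + x ^ 2) ^ (β / 2) - 1)) :
    (∃ m : ℝ, 0 < m ∧ ∃ M : ℝ, 0 ≤ M ∧ ∀ x : ℝ, M ≤ |x| → m ≤ deriv (deriv U) x)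
      ↔ 2 ≤ β := by
  have hβ0 : (0:ℝ) < β := by linarith
  have hpos : ∀ x : ℝ, (0:ℝ) < 1 + x ^ 2 := fun x => by positivity
  -- first derivative
  have hD1 : deriv U = fun x => x * (1 + x ^ 2) ^ (β / 2 - 1) := by
    funext x
    have h1 : HasDerivAt (fun x : ℝ => 1 + x ^ 2) (2 * x) x := by
      simpa using ((hasDerivAt_pow 2 x).const_add 1)
    have h2 := (h1.rpow_const (p := β / 2) (Or.inl (hpos x).ne')).sub_const 1
    have h3 := h2.const_mul (1 / β)
    have h4 : HasDerivAt U (1 / β * (2 * x * (β / 2) * (1 + x ^ 2) ^ (β / 2 - 1))) x := by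
      have := h3
      simp only [← hU] at this ⊢
      convert this using 2
    have : 1 / β * (2 * x * (β / 2) * (1 + x ^ 2) ^ (β / 2 - 1))
        = x * (1 + x ^ 2) ^ (β / 2 - 1) := by field_simp
    rw [← this]
    exact h4.deriv
  -- second derivative
  have hD2 : ∀ x : ℝ, deriv (deriv U) x
      = (1 + x ^ 2) ^ (β / 2 - 2) * (1 + (β - 1) * x ^ 2) := by
    intro x
    rw [hD1]
    have h1 : HasDerivAt (fun x : ℝ => 1 + x ^ 2) (2 * x) x := by
      simpa using ((hasDerivAt_pow 2 x).const_add 1)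
    have h2 := (hasDerivAt_id x).mul (h1.rpow_const (p := β / 2 - 1) (Or.inl (hpos x).ne'))
    have key : 1 * (1 + x ^ 2) ^ (β / 2 - 1) + x * (2 * x * (β / 2 - 1) * (1 + x ^ 2) ^ (β / 2 - 1 - 1))
        = (1 + x ^ 2) ^ (β / 2 - 2) * (1 + (β - 1) * x ^ 2) := by
      have e1 : (β / 2 - 1) = (β / 2 - 2) + 1 := by ring
      have e2 : (β / 2 - 1 - 1) = (β / 2 - 2) := by ring
      rw [e2, e1, Real.rpow_add (hpos x), Real.rpow_one]
      ring
    rw [← key]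
    exact h2.deriv
  constructor
  · -- forward: assume strong convexity outside compact, show 2 ≤ β
    rintro ⟨m, hm, M, hM, h⟩
    by_contra hlt
    push_neg at hlt
    have h2β : 0 < 2 - β := by linarith
    set x : ℝ := max M 1 + (β / m) ^ (2 - β)⁻¹ + 1 with hx
    have hbm : (0:ℝ) ≤ β / m := le_of_lt (by positivity)
    have hx1 : (1:ℝ) ≤ x := by
      have : (0:ℝ) ≤ (β / m) ^ (2 - β)⁻¹ := Real.rpow_nonneg hbm _
      have := le_max_right M 1
      simp only [hx]; linarith
    have hxM : M ≤ x := by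
      have : (0:ℝ) ≤ (β / m) ^ (2 - β)⁻¹ := Real.rpow_nonneg hbm _
      have := le_max_left M 1
      simp only [hx]; linarith
    have hx0 : (0:ℝ) < x := by linarith
    have hbig : β / m < x ^ (2 - β) := by
      have hlt' : (β / m) ^ (2 - β)⁻¹ < x := by
        simp only [hx]
        have h01 : (0:ℝ) ≤ max M 1 := le_trans zero_le_one (le_max_right M 1)
        linarith
      calc β / m = ((β / m) ^ (2 - β)⁻¹) ^ (2 - β) := (Real.rpow_inv_rpow hbm h2β.ne').symm
        _ < x ^ (2 - β) := Real.rpow_lt_rpow (Real.rpow_nonneg hbm _) hlt' h2β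
    have hxabs : M ≤ |x| := by rw [abs_of_pos hx0]; exact hxM
    have h1 := h x hxabs
    rw [hD2] at h1
    -- bound U'' above
    have hb1 : 1 + (β - 1) * x ^ 2 ≤ β * (1 + x ^ 2) := by nlinarith
    have hb2 : (1 + x ^ 2) ^ (β / 2 - 2) * (1 + (β - 1) * x ^ 2)
        ≤ β * (1 + x ^ 2) ^ (β / 2 - 1) := by
      have e1 : (β / 2 - 1) = (β / 2 - 2) + 1 := by ring
      rw [e1, Real.rpow_add (hpos x), Real.rpow_one]
      have hp : (0:ℝ) < (1 + x ^ 2) ^ (β / 2 - 2) := Real.rpow_pos_of_pos (hpos x) _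
      nlinarith [mul_le_mul_of_nonneg_left hb1 hp.le]
    have hb3 : (1 + x ^ 2) ^ (β / 2 - 1) ≤ (x ^ 2) ^ (β / 2 - 1) := by
      apply Real.rpow_le_rpow_of_nonpos (by positivity) (by linarith) (by linarith)
    have hb4 : (x ^ 2 : ℝ) ^ (β / 2 - 1) = x ^ (β - 2) := by
      rw [← Real.rpow_natCast x 2, ← Real.rpow_mul hx0.le]
      norm_num; ring_nf
    have hb5 : x ^ (β - 2) = (x ^ (2 - β))⁻¹ := by
      rw [← Real.rpow_neg hx0.le]; ring_nf
    have hxpow : (0:ℝ) < x ^ (2 - β) := Real.rpow_pos_of_pos hx0 _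
    have hfin : β * (x ^ (2 - β))⁻¹ < m := by
      rw [mul_inv_lt_iff₀ hxpow]
      calc β = (β / m) * m := by field_simp
        _ < x ^ (2 - β) * m := by
          apply mul_lt_mul_of_pos_right hbig hm
        _ = m * x ^ (2 - β) := by ring
    have : m < m := by
      calc m ≤ (1 + x ^ 2) ^ (β / 2 - 2) * (1 + (β - 1) * x ^ 2) := h1
        _ ≤ β * (1 + x ^ 2) ^ (β / 2 - 1) := hb2
        _ ≤ β * (x ^ 2) ^ (β / 2 - 1) := by
            exact mul_le_mul_of_nonneg_left hb3 hβ0.le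
        _ = β * (x ^ (2 - β))⁻¹ := by rw [hb4, hb5]
        _ < m := hfin
    exact absurd this (lt_irrefl m)
  · -- backward: β ≥ 2 gives m = 1, M = 0
    intro h2β
    refine ⟨1, one_pos, 0, le_refl 0, fun x _ => ?_⟩
    rw [hD2]
    have hx1 : (1:ℝ) ≤ 1 + x ^ 2 := by nlinarith [sq_nonneg x]
    have hkey : (1 + x ^ 2) ^ (2 - β / 2) ≤ 1 + (β - 1) * x ^ 2 := by
      rcases le_or_gt (2 - β / 2) 0 with hc | hc
      · have := Real.rpow_le_one_of_one_le_of_nonpos hx1 hc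
        nlinarith
      · have : (1 + x ^ 2 : ℝ) ^ (2 - β / 2) ≤ (1 + x ^ 2) ^ (1:ℝ) := by
          apply Real.rpow_le_rpow_of_exponent_le hx1; linarith
        rw [Real.rpow_one] at this
        nlinarith
    have hp : (0:ℝ) < (1 + x ^ 2) ^ (β / 2 - 2) := Real.rpow_pos_of_pos (hpos x) _
    calc (1:ℝ) = (1 + x ^ 2) ^ (β / 2 - 2) * (1 + x ^ 2) ^ (2 - β / 2) := by
          rw [← Real.rpow_add (hpos x)]; norm_num
      _ ≤ (1 + x ^ 2) ^ (β / 2 - 2) * (1 + (β - 1) * x ^ 2) :=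
          mul_le_mul_of_nonneg_left hkey hp.le
end

section
/- (Polynomial tail bound for the sub-quadratic family) For 1 < β < 2, U(x) = (1/β)·((1+x²)^{β/2} − 1), and any M > 1, setting m = (1/β)·(1 + 1/M²)^{β/2−1}, one has U(y) ≥ U(x) + m·(y−x)^β for all y ≥ x ≥ M. -/
/-!
Write `c = (1 + 1/M²)^(β/2 - 1)`, so that `m = c/β`. For `t ≥ M > 0` we have
`1 + t² ≤ (1 + 1/M²) t²`, and since `β/2 - 1 ≤ 0` this gives the gradient bound
`U'(t) = t (1 + t²)^(β/2 - 1) ≥ c t^(β-1)`. For `t > x ≥ M` and `β ≥ 1` this dominates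
`c (t - x)^(β-1) = d/dt [m (t - x)^β]`, so `t ↦ U t - m (t - x)^β` is nondecreasing on `[x, y]`.
-/

open Real Set

theorem hasDerivAt_inv_mul_one_add_sq_rpow_sub_one {β : ℝ} (hβ : β ≠ 0) (t : ℝ) :
    HasDerivAt (fun s => 1 / β * ((1 + s ^ 2) ^ (β / 2) - 1)) (t * (1 + t ^ 2) ^ (β / 2 - 1)) t := by
  have hbase : HasDerivAt (fun s : ℝ => 1 + s ^ 2) (2 * t) t := by
    simpa using (hasDerivAt_pow 2 t).const_add 1
  refine (((hbase.rpow_const (p := β / 2) (Or.inl (by positivity))).sub_const 1).const_mul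
    (1 / β)).congr_deriv ?_
  field_simp

theorem rpow_mul_rpow_sub_one_le_mul_one_add_sq_rpow {β M t : ℝ} (hβ : β ≤ 2) (hM : 0 < M)
    (hMt : M ≤ t) :
    (1 + 1 / M ^ 2) ^ (β / 2 - 1) * t ^ (β - 1) ≤ t * (1 + t ^ 2) ^ (β / 2 - 1) := by
  have ht : 0 < t := hM.trans_le hMt
  have hsq : 1 + t ^ 2 ≤ (1 + 1 / M ^ 2) * t ^ 2 := by
    have : 1 ≤ t ^ 2 / M ^ 2 := by
      rw [le_div_iff₀ (by positivity)]
      nlinarith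
    linarith [show (1 + 1 / M ^ 2) * t ^ 2 = t ^ 2 + t ^ 2 / M ^ 2 by ring]
  have hsplit : t ^ (β - 1) = t * (t ^ 2) ^ (β / 2 - 1) := by
    rw [← rpow_natCast, ← rpow_mul ht.le, mul_comm t, ← rpow_add_one ht.ne']
    ring_nf
  calc (1 + 1 / M ^ 2) ^ (β / 2 - 1) * t ^ (β - 1)
      = t * ((1 + 1 / M ^ 2) * t ^ 2) ^ (β / 2 - 1) := by
        rw [hsplit, mul_rpow (by positivity) (by positivity)]; ring
    _ ≤ t * (1 + t ^ 2) ^ (β / 2 - 1) := by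
        gcongr ?_ * ?_
        exact rpow_le_rpow_of_nonpos (by positivity) hsq (by linarith)

theorem add_mul_sub_rpow_le_of_hasDerivAt {f f' : ℝ → ℝ} {x y m β : ℝ} (hβ : 0 < β)
    (hxy : x ≤ y) (hf : ContinuousOn f (Icc x y)) (hf' : ∀ t ∈ Ioo x y, HasDerivAt f (f' t) t)
    (hbound : ∀ t ∈ Ioo x y, m * (β * (t - x) ^ (β - 1)) ≤ f' t) :
    f x + m * (y - x) ^ β ≤ f y := by
  set g : ℝ → ℝ := fun t => f t - m * (t - x) ^ β
  have hg : ContinuousOn g (Icc x y) :=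
    hf.sub (continuousOn_const.mul ((continuousOn_id.sub continuousOn_const).rpow_const
      fun _ _ => Or.inr hβ.le))
  have hg' : ∀ t ∈ interior (Icc x y),
      HasDerivWithinAt g (f' t - m * (β * (t - x) ^ (β - 1))) (interior (Icc x y)) t := by
    rw [interior_Icc]
    intro t ht
    have hpow := ((hasDerivAt_id' t).sub_const x).rpow_const (p := β)
      (Or.inl (sub_ne_zero.mpr ht.1.ne'))
    exact (((hf' t ht).sub (hpow.const_mul m)).congr_deriv (by ring)).hasDerivWithinAt
  have hmono := monotoneOn_of_hasDerivWithinAt_nonneg (convex_Icc x y) hg hg' (by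
    rw [interior_Icc]
    exact fun t ht => sub_nonneg.mpr (hbound t ht))
  have := hmono (left_mem_Icc.mpr hxy) (right_mem_Icc.mpr hxy) hxy
  simp only [g, sub_self, zero_rpow hβ.ne', mul_zero, sub_zero] at this
  linarith

theorem stmt_18 (β : ℝ) (hβ₁ : 1 < β) (hβ₂ : β < 2) (U : ℝ → ℝ)
    (hU : ∀ x : ℝ, U x = (1 / β) * ((1 + x ^ 2) ^ (β / 2) - 1))
    (M : ℝ) (hM : 1 < M) (m : ℝ) (hm : m = (1 / β) * (1 + 1 / M ^ 2) ^ (β / 2 - 1)) :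
    ∀ x y : ℝ, M ≤ x → x ≤ y → U x + m * (y - x) ^ β ≤ U y := by
  intro x y hMx hxy
  have hβ : 0 < β := by linarith
  obtain rfl : U = fun s => 1 / β * ((1 + s ^ 2) ^ (β / 2) - 1) := funext hU
  refine add_mul_sub_rpow_le_of_hasDerivAt hβ hxy (by fun_prop (disch := positivity))
    (fun t _ => hasDerivAt_inv_mul_one_add_sq_rpow_sub_one hβ.ne' t) fun t ht => ?_
  have hmβ : m * β = (1 + 1 / M ^ 2) ^ (β / 2 - 1) := by rw [hm]; field_simp
  calc m * (β * (t - x) ^ (β - 1))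
      = (1 + 1 / M ^ 2) ^ (β / 2 - 1) * (t - x) ^ (β - 1) := by rw [← hmβ]; ring
    _ ≤ (1 + 1 / M ^ 2) ^ (β / 2 - 1) * t ^ (β - 1) := by
        gcongr <;> linarith [ht.1]
    _ ≤ t * (1 + t ^ 2) ^ (β / 2 - 1) :=
        rpow_mul_rpow_sub_one_le_mul_one_add_sq_rpow hβ₂.le (by linarith) (hMx.trans ht.1.le)
end
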